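/- arXiv:1811.02128 — 2 statements merged into one kernel-verified Lean document; each statement's English description precedes it below -/
import Mathlib

section
/- Let F be a field of characteristic different from 2 and n ≥ 1. The center of the symplectic group Sp_{2n}(F) is {I_{2n}, −I_{2n}}; that is, a matrix A ∈ Sp_{2n}(F) satisfies A·B = B·A for every B ∈ Sp_{2n}(F) if and only if A = I_{2n} or A = −I_{2n}. -/
/-!
Because `Ψ` is alternating (`vᵀ Ψ v = 0`), every transvection `1 + Ψ v vᵀ` is symplectic,
and so is `Ψ` itself. A central `A` thus commutes with `Ψ`, hence with every `v vᵀ`, hence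
with every matrix unit `E_ij = E_ii (e_i + e_j)(e_i + e_j)ᵀ - E_ii`; so `A = c • 1`, and
`A Ψ Aᵀ = Ψ` forces `c² = 1`.
-/

open Matrix

/-- The `d × d` exchange matrix `Ω_d`: entry 1 exactly when (1-based) `i + j = d + 1`. -/
def omegaMat (F : Type*) [CommRing F] (d : ℕ) : Matrix (Fin d) (Fin d) F :=
  fun i j => if (i : ℕ) + (j : ℕ) + 1 = d then 1 else 0

/-- `SO_d(F)`: the set of `d × d` matrices with `A · Ω_d · Aᵀ = Ω_d` and `det A = 1`. -/
def SOset (F : Type*) [CommRing F] (d : ℕ) : Set (Matrix (Fin d) (Fin d) F) :=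
  {A | A * omegaMat F d * Aᵀ = omegaMat F d ∧ A.det = 1}

/-- `Ψ_{2n} = [[0, Ω_n], [−Ω_n, 0]]`. -/
def PsiMat (F : Type*) [CommRing F] (n : ℕ) : Matrix (Fin (2*n)) (Fin (2*n)) F :=
  fun i j => if (i : ℕ) + (j : ℕ) + 1 = 2*n then (if (i : ℕ) < n then 1 else -1) else 0

/-- `Sp_{2n}(F)`: the set of `2n × 2n` matrices with `A · Ψ_{2n} · Aᵀ = Ψ_{2n}`. -/
def SpSet (F : Type*) [CommRing F] (n : ℕ) : Set (Matrix (Fin (2*n)) (Fin (2*n)) F) :=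
  {A | A * PsiMat F n * Aᵀ = PsiMat F n}

/-- Kronecker product, regarded as an `(nm) × (nm)` matrix via the lexicographic
identification sending the (1-based) pair `(i,k)` to `m(i−1)+k`. -/
def kron {F : Type*} [CommRing F] {n m : ℕ} (A : Matrix (Fin n) (Fin n) F)
    (B : Matrix (Fin m) (Fin m) F) : Matrix (Fin (n*m)) (Fin (n*m)) F :=
  Matrix.reindex finProdFinEquiv finProdFinEquiv (Matrix.kroneckerMap (· * ·) A B)

/-- 1-based matrix unit `E_{i,j}` in `M_d(F)`. -/
def Eunit (F : Type*) [CommRing F] (d : ℕ) (i j : ℕ) : Matrix (Fin d) (Fin d) F :=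
  fun p q => if (p : ℕ) + 1 = i ∧ (q : ℕ) + 1 = j then 1 else 0

section Transvection

variable {ι R : Type*} [Fintype ι] [DecidableEq ι] [CommRing R]

theorem one_add_mul_vecMulVec_self_mul_mul_transpose {J : Matrix ι ι R} (hJ : Jᵀ = -J)
    (hJv : ∀ v, v ⬝ᵥ J *ᵥ v = 0) (v : ι → R) :
    (1 + J * vecMulVec v v) * J * (1 + J * vecMulVec v v)ᵀ = J := by
  have hVJV : vecMulVec v v * J * vecMulVec v v = 0 := by
    rw [vecMulVec_mul, vecMulVec_mul_vecMulVec, ← dotProduct_mulVec, hJv, zero_smul,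
      vecMulVec_zero]
  rw [transpose_add, transpose_one, transpose_mul, transpose_vecMulVec, hJ]
  calc (1 + J * vecMulVec v v) * J * (1 + vecMulVec v v * -J)
      = J - J * (vecMulVec v v * J * vecMulVec v v) * J := by noncomm_ring
    _ = J := by rw [hVJV, mul_zero, zero_mul, sub_zero]

theorem mem_range_scalar_of_forall_commute_vecMulVec_self {A : Matrix ι ι R}
    (hA : ∀ v, Commute A (vecMulVec v v)) : A ∈ Set.range (scalar ι) := by
  refine mem_range_scalar_of_commute_single fun i j hij => ?_
  have hE : single i j (1 : R) = vecMulVec (Pi.single i 1) (Pi.single i 1) *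
        vecMulVec (Pi.single i 1 + Pi.single j 1) (Pi.single i 1 + Pi.single j 1) -
      vecMulVec (Pi.single i 1) (Pi.single i 1) := by
    rw [vecMulVec_mul_vecMulVec, single_eq_single_vecMulVec_single]
    simp [hij, vecMulVec_add]
  show Commute _ A
  rw [hE]
  exact (((hA _).mul_right (hA _)).sub_right (hA _)).symm

end Transvection

section Symplectic

variable {R : Type*} [CommRing R] {n : ℕ}

theorem PsiMat_mulVec_apply (v : Fin (2 * n) → R) (i : Fin (2 * n)) :
    (PsiMat R n *ᵥ v) i = (if (i : ℕ) < n then 1 else -1) * v i.rev := by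
  rw [mulVec, dotProduct, Finset.sum_eq_single i.rev]
  · simp [PsiMat, Fin.val_rev]
    omega
  · intro j _ hj
    have : ¬ (i : ℕ) + j + 1 = 2 * n := fun h => hj (Fin.ext (by simp [Fin.val_rev]; omega))
    simp [PsiMat, this]
  · simp

theorem PsiMat_transpose : (PsiMat R n)ᵀ = -PsiMat R n := by
  ext i j
  simp only [transpose_apply, Matrix.neg_apply, PsiMat]
  split_ifs <;> first | omega | simp

theorem PsiMat_mul_self : PsiMat R n * PsiMat R n = -1 := by
  refine ext_of_mulVec_single fun j => funext fun i => ?_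
  rw [← mulVec_mulVec, PsiMat_mulVec_apply, PsiMat_mulVec_apply, Fin.rev_rev, neg_mulVec,
    one_mulVec]
  simp only [Fin.val_rev, Pi.neg_apply]
  split_ifs <;> first | omega | ring

theorem dotProduct_PsiMat_mulVec_self (v : Fin (2 * n) → R) : v ⬝ᵥ PsiMat R n *ᵥ v = 0 := by
  refine Finset.sum_ninvolution Fin.rev (fun i => ?_) (fun i _ h => ?_) (fun _ => Finset.mem_univ _)
    Fin.rev_rev
  · simp only [PsiMat_mulVec_apply, Fin.rev_rev, Fin.val_rev]
    split_ifs <;> first | omega | ring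
  · have := congrArg Fin.val h
    simp [Fin.val_rev] at this
    omega

theorem PsiMat_mem_SpSet : PsiMat R n ∈ SpSet R n := by
  show _ * _ * _ = _
  rw [PsiMat_transpose, PsiMat_mul_self, mul_neg, neg_one_mul, neg_neg]

theorem one_add_PsiMat_mul_vecMulVec_self_mem_SpSet (v : Fin (2 * n) → R) :
    1 + PsiMat R n * vecMulVec v v ∈ SpSet R n :=
  one_add_mul_vecMulVec_self_mul_mul_transpose PsiMat_transpose dotProduct_PsiMat_mulVec_self v

theorem commute_vecMulVec_self_of_forall_commute
    {A : Matrix (Fin (2 * n)) (Fin (2 * n)) R} (hA : ∀ B ∈ SpSet R n, Commute A B)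
    (v : Fin (2 * n) → R) : Commute A (vecMulVec v v) := by
  have hΨ : Commute A (PsiMat R n) := hA _ PsiMat_mem_SpSet
  have hΨV : Commute A (PsiMat R n * vecMulVec v v) := by
    simpa using (hA _ (one_add_PsiMat_mul_vecMulVec_self_mem_SpSet v)).sub_right (.one_right A)
  have hV : vecMulVec v v = -PsiMat R n * (PsiMat R n * vecMulVec v v) := by
    rw [← mul_assoc, neg_mul, PsiMat_mul_self, neg_neg, one_mul]
  rw [hV]
  exact hΨ.neg_right.mul_right hΨV

theorem eq_one_or_eq_neg_one_of_scalar_mem_SpSet [NoZeroDivisors R] {c : R}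
    (hc : scalar (Fin (2 * n)) c ∈ SpSet R n) :
    scalar (Fin (2 * n)) c = 1 ∨ scalar (Fin (2 * n)) c = -1 := by
  obtain _ | ⟨⟨i⟩⟩ := isEmpty_or_nonempty (Fin (2 * n))
  · exact .inl (Subsingleton.elim _ _)
  rw [scalar_apply, ← smul_one_eq_diagonal] at hc ⊢
  have hcc : (c * c) • PsiMat R n = PsiMat R n := by
    simpa [SpSet, smul_smul] using hc
  have hc2 : c * c = 1 := by
    have h := congrArg (· * PsiMat R n) hcc
    simp only [Matrix.smul_mul, PsiMat_mul_self, smul_neg, neg_inj] at h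
    simpa using congrFun₂ h i i
  rcases mul_self_eq_one_iff.mp hc2 with rfl | rfl <;> simp

end Symplectic

theorem sp_center_general (F : Type*) [Field F]
    (n : ℕ)
    (A : Matrix (Fin (2*n)) (Fin (2*n)) F) (hA : A ∈ SpSet F n) :
    (∀ B ∈ SpSet F n, A * B = B * A) ↔ A = 1 ∨ A = -1 := by
  refine ⟨fun hcomm => ?_, ?_⟩
  · obtain ⟨c, rfl⟩ := mem_range_scalar_of_forall_commute_vecMulVec_self
      (commute_vecMulVec_self_of_forall_commute hcomm)
    exact eq_one_or_eq_neg_one_of_scalar_mem_SpSet hA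
  · rintro (rfl | rfl) B - <;> simp

/-- over a field of characteristic ≠ 2, the center of `Sp_{2n}(F)` is
`{I, −I}`: an element `A ∈ Sp_{2n}(F)` commutes with every element of `Sp_{2n}(F)` if
and only if `A = I` or `A = −I`. -/
theorem sp_center (F : Type*) [Field F] (hchar : ringChar F ≠ 2)
    (n : ℕ) (hn : 1 ≤ n)
    (A : Matrix (Fin (2*n)) (Fin (2*n)) F) (hA : A ∈ SpSet F n) :
    (∀ B ∈ SpSet F n, A * B = B * A) ↔ A = 1 ∨ A = -1 :=
  sp_center_general F n A hA
end

section
/- Let F be a field, n, m ≥ 1, 1 ≤ i < j ≤ m, and u ∈ F. Write x^{(d)}_α(u) for the orthogonal Chevalley generators in M_d(F). Then, under the lexicographic identification of Kronecker products, the following identities hold in M_{4nm}(F): I_{2n} ⊗ x^{(2m)}_{e_i−e_j}(u) = ∏_{k=0}^{n−1} x^{(4nm)}_{e_{2mk+i} − e_{2mk+j}}(u) · x^{(4nm)}_{e_{2mk+(2m+1−j)} − e_{2mk+(2m+1−i)}}(−u) and I_{2n} ⊗ x^{(2m)}_{e_i+e_j}(u) = ∏_{k=0}^{n−1} x^{(4nm)}_{e_{2mk+i}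 − e_{2mk+(2m+1−j)}}(u) · x^{(4nm)}_{e_{2mk+j} − e_{2mk+(2m+1−i)}}(−u); in each product the factors pairwise commute, so the order of multiplication is immaterial. (These are the formulas for the images ρ_SO(I, x_{e_i−e_j}(u)) and ρ_SO(I, x_{e_i+e_j}(u)) of the Kronecker tensor product map SO_{2n} × SO_{2m} → SO_{4nm}.) -/
open Matrix

/-- Symplectic Chevalley generator `x_{e_i−e_j}(t) = I + t(E_{i,j} − E_{2n+1−j,2n+1−i})`. -/
def xCsub (F : Type*) [CommRing F] (n i j : ℕ) (t : F) : Matrix (Fin (2*n)) (Fin (2*n)) F :=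
  1 + t • (Eunit F (2*n) i j - Eunit F (2*n) (2*n+1-j) (2*n+1-i))

/-- Symplectic Chevalley generator `x_{e_i+e_j}(t) = I + t(E_{i,2n+1−j} + E_{j,2n+1−i})`. -/
def xCadd (F : Type*) [CommRing F] (n i j : ℕ) (t : F) : Matrix (Fin (2*n)) (Fin (2*n)) F :=
  1 + t • (Eunit F (2*n) i (2*n+1-j) + Eunit F (2*n) j (2*n+1-i))

/-- Symplectic Chevalley generator `x_{2e_j}(t) = I + t·E_{j,2n+1−j}`. -/
def xClong (F : Type*) [CommRing F] (n j : ℕ) (t : F) : Matrix (Fin (2*n)) (Fin (2*n)) F :=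
  1 + t • Eunit F (2*n) j (2*n+1-j)

/-- Signed symplectic generator `x_{a₁e_i + a₂e_j}(t)` for `i < j` and `a₁, a₂ ∈ {1,−1}`,
using the convention `x_{−α}(t) = x_α(t)ᵀ`. -/
def xCs (F : Type*) [CommRing F] (n i j : ℕ) (a₁ a₂ : ℤ) (t : F) :
    Matrix (Fin (2*n)) (Fin (2*n)) F :=
  if a₁ = 1 then (if a₂ = 1 then xCadd F n i j t else xCsub F n i j t)
  else (if a₂ = 1 then (xCsub F n i j t)ᵀ else (xCadd F n i j t)ᵀ)

/-- Signed symplectic generator `x_{2a e_j}(t)` for `a ∈ {1,−1}`. -/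
def xCls (F : Type*) [CommRing F] (n j : ℕ) (a : ℤ) (t : F) :
    Matrix (Fin (2*n)) (Fin (2*n)) F :=
  if a = 1 then xClong F n j t else (xClong F n j t)ᵀ

/-- Orthogonal Chevalley generator `x_{e_i−e_j}(t) = I + t(E_{i,j} − E_{d+1−j,d+1−i})`. -/
def xDsub (F : Type*) [CommRing F] (d i j : ℕ) (t : F) : Matrix (Fin d) (Fin d) F :=
  1 + t • (Eunit F d i j - Eunit F d (d+1-j) (d+1-i))

/-- Orthogonal Chevalley generator `x_{e_i+e_j}(t) = I + t(E_{i,d+1−j} − E_{j,d+1−i})`. -/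
def xDadd (F : Type*) [CommRing F] (d i j : ℕ) (t : F) : Matrix (Fin d) (Fin d) F :=
  1 + t • (Eunit F d i (d+1-j) - Eunit F d j (d+1-i))

/-- Signed orthogonal generator `x_{a₁e_i + a₂e_j}(t)` in `M_d(F)`, for `i < j` and
`a₁, a₂ ∈ {1,−1}`, with the convention `x_{−α}(t) = x_α(t)ᵀ`. -/
def xDs (F : Type*) [CommRing F] (d i j : ℕ) (a₁ a₂ : ℤ) (t : F) :
    Matrix (Fin d) (Fin d) F :=
  if a₁ = 1 then (if a₂ = 1 then xDadd F d i j t else xDsub F d i j t)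
  else (if a₂ = 1 then (xDsub F d i j t)ᵀ else (xDadd F d i j t)ᵀ)

/-- Short orthogonal Chevalley generator
`x_{e_j}(t) = I + s·t·E_{j,n+1} − s·t·E_{n+1,2n+2−j} − t²·E_{j,2n+2−j}` in `M_{2n+1}(F)`,
where `s² = 2`. -/
def xBshort (F : Type*) [CommRing F] (n : ℕ) (s : F) (j : ℕ) (t : F) :
    Matrix (Fin (2*n+1)) (Fin (2*n+1)) F :=
  1 + (s*t) • Eunit F (2*n+1) j (n+1) - (s*t) • Eunit F (2*n+1) (n+1) (2*n+2-j)
    - (t^2) • Eunit F (2*n+1) j (2*n+2-j)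

/-- Signed short orthogonal generator `x_{a e_j}(t)` for `a ∈ {1,−1}`. -/
def xBs (F : Type*) [CommRing F] (n : ℕ) (s : F) (j : ℕ) (a : ℤ) (t : F) :
    Matrix (Fin (2*n+1)) (Fin (2*n+1)) F :=
  if a = 1 then xBshort F n s j t else (xBshort F n s j t)ᵀ

/-- The commutator `(g,h) = g·h·g⁻¹·h⁻¹`. -/
noncomputable def mcomm {F : Type*} [Field F] {d : ℕ} (g h : Matrix (Fin d) (Fin d) F) :
    Matrix (Fin d) (Fin d) F :=
  g * h * g⁻¹ * h⁻¹

section helpers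

lemma Eunit_mul_of_ne {F : Type*} [CommRing F] {D a b c d : ℕ} (h : b ≠ c) :
    Eunit F D a b * Eunit F D c d = 0 := by
  ext p q
  simp only [Matrix.mul_apply, Eunit, Matrix.zero_apply]
  apply Finset.sum_eq_zero
  intro r _
  split_ifs with h1 h2 <;> simp_all

lemma blk_eq {M k k' r r' : ℕ} (hr : 1 ≤ r) (hr2 : r ≤ M) (hr' : 1 ≤ r') (hr2' : r' ≤ M)
    (h : M*k + r = M*k' + r') : k = k' ∧ r = r' := by
  have hk : k = k' := by
    rcases Nat.lt_trichotomy k k' with h1 | h1 | h1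
    · exfalso
      have h2 : M*(k+1) ≤ M*k' := Nat.mul_le_mul_left _ h1
      have h3 : M*(k+1) = M*k + M := by ring
      linarith
    · exact h1
    · exfalso
      have h2 : M*(k'+1) ≤ M*k := Nat.mul_le_mul_left _ h1
      have h3 : M*(k'+1) = M*k' + M := by ring
      linarith
  subst hk
  exact ⟨rfl, Nat.add_left_cancel h⟩

lemma blk_ne {M k k' r r' : ℕ} (hr : 1 ≤ r) (hr2 : r ≤ M) (hr' : 1 ≤ r') (hr2' : r' ≤ M)
    (hne : r ≠ r') : M*k + r ≠ M*k' + r' := by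
  intro h
  exact hne (blk_eq hr hr2 hr' hr2' h).2

lemma mirror {n m k k' r r' : ℕ} (hk : k + k' + 1 = 2*n) (hrr : r + r' = 2*m+1)
    (hr : 1 ≤ r) (hr2 : r ≤ 2*m) : 2*n*(2*m)+1-(2*m*k+r) = 2*m*k' + r' := by
  have h1 : 2*m*k + 2*m*k' + 2*m = 2*n*(2*m) := by
    calc 2*m*k + 2*m*k' + 2*m = 2*m*(k+k'+1) := by ring
    _ = 2*m*(2*n) := by rw [hk]
    _ = 2*n*(2*m) := by ring
  have h2 : 2*n*(2*m)+1 = (2*m*k'+r') + (2*m*k+r) := by linarith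
  exact Nat.sub_eq_of_eq_add h2

lemma part_zero {F : Type*} [CommRing F] {d M : ℕ}
    {r1 r2 r3 r4 s1 t1 s2 t2 s3 t3 s4 t4 : ℕ}
    (ht1 : 1 ≤ t1) (ht1' : t1 ≤ M) (ht2 : 1 ≤ t2) (ht2' : t2 ≤ M)
    (hs3 : 1 ≤ s3) (hs3' : s3 ≤ M) (hs4 : 1 ≤ s4) (hs4' : s4 ≤ M)
    (h13 : t1 ≠ s3) (h14 : t1 ≠ s4) (h23 : t2 ≠ s3) (h24 : t2 ≠ s4)
    (u₁ u₂ v₁ v₂ : F) :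
    (u₁ • Eunit F d (M*r1+s1) (M*r1+t1) - u₂ • Eunit F d (M*r2+s2) (M*r2+t2)) *
    (v₁ • Eunit F d (M*r3+s3) (M*r3+t3) - v₂ • Eunit F d (M*r4+s4) (M*r4+t4)) = 0 := by
  have z13 : Eunit F d (M*r1+s1) (M*r1+t1) * Eunit F d (M*r3+s3) (M*r3+t3) = 0 :=
    Eunit_mul_of_ne (blk_ne ht1 ht1' hs3 hs3' h13)
  have z14 : Eunit F d (M*r1+s1) (M*r1+t1) * Eunit F d (M*r4+s4) (M*r4+t4) = 0 :=
    Eunit_mul_of_ne (blk_ne ht1 ht1' hs4 hs4' h14)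
  have z23 : Eunit F d (M*r2+s2) (M*r2+t2) * Eunit F d (M*r3+s3) (M*r3+t3) = 0 :=
    Eunit_mul_of_ne (blk_ne ht2 ht2' hs3 hs3' h23)
  have z24 : Eunit F d (M*r2+s2) (M*r2+t2) * Eunit F d (M*r4+s4) (M*r4+t4) = 0 :=
    Eunit_mul_of_ne (blk_ne ht2 ht2' hs4 hs4' h24)
  rw [sub_mul, mul_sub, mul_sub]
  simp only [Matrix.smul_mul, Matrix.mul_smul, z13, z14, z23, z24, smul_zero, sub_zero,
    sub_self]

lemma factor_eq (F : Type*) [CommRing F] (n m k : ℕ) (hk : k < 2*n) (s t s' t' : ℕ)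
    (hst : s + t' = 2*m+1) (hts : t + s' = 2*m+1)
    (hs : 1 ≤ s) (hs2 : s ≤ 2*m) (ht : 1 ≤ t) (ht2 : t ≤ 2*m) (u : F) :
    xDsub F ((2*n)*(2*m)) (2*m*k+s) (2*m*k+t) u
      = 1 + (u • Eunit F ((2*n)*(2*m)) (2*m*k+s) (2*m*k+t)
           - u • Eunit F ((2*n)*(2*m)) (2*m*(2*n-1-k)+s') (2*m*(2*n-1-k)+t')) := by
  have m1 : (2*n)*(2*m)+1-(2*m*k+t) = 2*m*(2*n-1-k)+s' := mirror (by omega) hts ht ht2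
  have m2 : (2*n)*(2*m)+1-(2*m*k+s) = 2*m*(2*n-1-k)+t' := mirror (by omega) hst hs hs2
  rw [xDsub, m1, m2, smul_sub]

lemma kron_add_right {F : Type*} [CommRing F] {n m : ℕ}
    (A : Matrix (Fin n) (Fin n) F) (B C : Matrix (Fin m) (Fin m) F) :
    kron A (B + C) = kron A B + kron A C := by
  ext p q
  simp [kron, Matrix.kroneckerMap_apply, mul_add]

lemma kron_sub_right {F : Type*} [CommRing F] {n m : ℕ}
    (A : Matrix (Fin n) (Fin n) F) (B C : Matrix (Fin m) (Fin m) F) :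
    kron A (B - C) = kron A B - kron A C := by
  ext p q
  simp [kron, Matrix.kroneckerMap_apply, mul_sub]

lemma kron_smul_right {F : Type*} [CommRing F] {n m : ℕ} (t : F)
    (A : Matrix (Fin n) (Fin n) F) (B : Matrix (Fin m) (Fin m) F) :
    kron A (t • B) = t • kron A B := by
  ext p q
  simp [kron, Matrix.kroneckerMap_apply, smul_eq_mul]
  ring

lemma kron_one_one {F : Type*} [CommRing F] {n m : ℕ} :
    kron (1 : Matrix (Fin n) (Fin n) F) (1 : Matrix (Fin m) (Fin m) F) = 1 := by
  have h : (Matrix.kroneckerMap (· * ·) (1 : Matrix (Fin n) (Fin n) F)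
      (1 : Matrix (Fin m) (Fin m) F)) = 1 := Matrix.one_kronecker_one
  rw [kron, h]
  simp [Matrix.reindex_apply, Matrix.submatrix_one_equiv]

lemma list_range_sum {M : Type*} [AddCommMonoid M] (f : ℕ → M) (n : ℕ) :
    ((List.range n).map f).sum = ∑ k ∈ Finset.range n, f k := by
  induction n with
  | zero => simp
  | succ n ih => rw [List.range_succ, Finset.sum_range_succ, List.map_append, List.sum_append]
                 simp [ih]

lemma mul_list_sum_zero {R : Type*} [Ring R] {h : R} :
    ∀ (l : List R), (∀ y ∈ l, h * y = 0) → h * l.sum = 0 := by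
  intro l
  induction l with
  | nil => simp
  | cons a t ih =>
      intro hz
      rw [List.sum_cons, mul_add, hz a (by simp), ih (fun y hy => hz y (by simp [hy])), add_zero]

lemma list_prod_one_add {R : Type*} [Ring R] :
    ∀ (L : List R), (∀ x ∈ L, ∀ y ∈ L, x * y = 0) →
      (L.map (fun x => 1 + x)).prod = 1 + L.sum := by
  intro L
  induction L with
  | nil => simp
  | cons h t ih =>
      intro hz
      rw [List.map_cons, List.prod_cons, List.sum_cons,
        ih (fun x hx y hy => hz x (by simp [hx]) y (by simp [hy]))]
      have hts : h * t.sum = 0 :=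
        mul_list_sum_zero t (fun y hy => hz h (by simp) y (by simp [hy]))
      have e : (1 + h) * (1 + t.sum) = 1 + (h + t.sum) + h * t.sum := by noncomm_ring
      rw [e, hts, add_zero]

lemma commute_one_add {R : Type*} [Ring R] {p q : R} (h1 : p * q = 0) (h2 : q * p = 0) :
    Commute (1 + p) (1 + q) := by
  have e1 : (1 + p) * (1 + q) = 1 + p + q + p * q := by noncomm_ring
  have e2 : (1 + q) * (1 + p) = 1 + p + q + q * p := by noncomm_ring
  show (1 + p) * (1 + q) = (1 + q) * (1 + p)
  rw [e1, e2, h1, h2]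

lemma sum_fold {G : Type*} [AddCommMonoid G] (n : ℕ) (f : ℕ → G) :
    ∑ k ∈ Finset.range n, (f k + f (2*n-1-k)) = ∑ r ∈ Finset.range (2*n), f r := by
  rw [Finset.sum_add_distrib]
  have h2 : ∑ k ∈ Finset.range n, f (2*n-1-k) = ∑ k ∈ Finset.range n, f (n + k) := by
    rw [← Finset.sum_range_reflect (fun j => f (n + j)) n]
    apply Finset.sum_congr rfl
    intro k hk
    simp only [Finset.mem_range] at hk
    congr 1
    omega
  rw [h2, two_mul, Finset.sum_range_add]

lemma kron_one_Eunit (F : Type*) [CommRing F] (N M a b : ℕ)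
    (ha1 : 1 ≤ a) (ha2 : a ≤ M) (hb1 : 1 ≤ b) (hb2 : b ≤ M) :
    kron (1 : Matrix (Fin N) (Fin N) F) (Eunit F M a b)
      = ∑ r ∈ Finset.range N, Eunit F (N*M) (M*r+a) (M*r+b) := by
  have hM : 0 < M := le_trans ha1 ha2
  ext p q
  rw [Matrix.sum_apply]
  obtain ⟨P1, P2, hp, hpm, hpN, hP1, hP2⟩ :
      ∃ P1 P2, (p:ℕ) = M*P1 + P2 ∧ P2 < M ∧ P1 < N ∧ (p:ℕ)/M = P1 ∧ (p:ℕ)%M = P2 :=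
    ⟨_, _, (Nat.div_add_mod _ _).symm, Nat.mod_lt _ hM,
      (Nat.div_lt_iff_lt_mul hM).mpr p.2, rfl, rfl⟩
  obtain ⟨Q1, Q2, hq, hqm, hQ1, hQ2⟩ :
      ∃ Q1 Q2, (q:ℕ) = M*Q1 + Q2 ∧ Q2 < M ∧ (q:ℕ)/M = Q1 ∧ (q:ℕ)%M = Q2 :=
    ⟨_, _, (Nat.div_add_mod _ _).symm, Nat.mod_lt _ hM, rfl, rfl⟩
  have lhs : kron (1 : Matrix (Fin N) (Fin N) F) (Eunit F M a b) p q
      = if P1 = Q1 ∧ P2 + 1 = a ∧ Q2 + 1 = b then 1 else 0 := by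
    have hdiv : (Fin.divNat p = Fin.divNat q) = (P1 = Q1) := by
      rw [eq_iff_iff, Fin.ext_iff, Fin.coe_divNat, Fin.coe_divNat, hP1, hQ1]
    simp only [kron, Matrix.reindex_apply, Matrix.submatrix_apply,
      finProdFinEquiv_symm_apply, Matrix.kroneckerMap_apply, Matrix.one_apply, Eunit,
      hdiv, Fin.coe_modNat, hP2, hQ2]
    split_ifs with h1 h2 h3 <;> first | (exfalso; tauto) | norm_num
  rw [lhs]
  by_cases hc : P1 = Q1 ∧ P2 + 1 = a ∧ Q2 + 1 = b
  · rw [if_pos hc]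
    obtain ⟨h1, h2, h3⟩ := hc
    subst h1
    rw [Finset.sum_eq_single_of_mem P1 (Finset.mem_range.mpr hpN)]
    · rw [Eunit, if_pos]
      exact ⟨by omega, by omega⟩
    · intro r _ hne
      rw [Eunit, if_neg]
      rintro ⟨c1, _⟩
      have e1 : M * P1 + (P2 + 1) = M * r + a := by omega
      exact hne ((blk_eq (by omega) (by omega) ha1 ha2 e1).1).symm
  · rw [if_neg hc]
    symm
    apply Finset.sum_eq_zero
    intro r _
    rw [Eunit, if_neg]
    rintro ⟨c1, c2⟩
    have e1 : M * P1 + (P2 + 1) = M * r + a := by omega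
    have e2 : M * Q1 + (Q2 + 1) = M * r + b := by omega
    obtain ⟨hr1, hra⟩ := blk_eq (by omega) (by omega) ha1 ha2 e1
    obtain ⟨hr2, hrb⟩ := blk_eq (by omega) (by omega) hb1 hb2 e2
    exact hc ⟨by omega, by omega, by omega⟩

end helpers

lemma master (F : Type*) [Field F] (n m : ℕ) (a b a' b' : ℕ)
    (ha1 : 1 ≤ a) (ha2 : a ≤ 2*m) (hb1 : 1 ≤ b) (hb2 : b ≤ 2*m)
    (ha'1 : 1 ≤ a') (ha'2 : a' ≤ 2*m) (hb'1 : 1 ≤ b') (hb'2 : b' ≤ 2*m)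
    (hab' : a + b' = 2*m+1) (hba' : b + a' = 2*m+1)
    (hne1 : a ≠ b) (hne2 : a ≠ b') (hne3 : a' ≠ b) (hne4 : a' ≠ b') (u : F) :
    kron (1 : Matrix (Fin (2*n)) (Fin (2*n)) F)
        (1 + u • (Eunit F (2*m) a b - Eunit F (2*m) a' b'))
      = ((List.range n).map (fun k => xDsub F ((2*n)*(2*m)) (2*m*k+a) (2*m*k+b) u
          * xDsub F ((2*n)*(2*m)) (2*m*k+a') (2*m*k+b') (-u))).prod
    ∧ ∀ k < n, ∀ k' < n,
        Commute (xDsub F ((2*n)*(2*m)) (2*m*k+a) (2*m*k+b) u)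
          (xDsub F ((2*n)*(2*m)) (2*m*k'+a) (2*m*k'+b) u)
      ∧ Commute (xDsub F ((2*n)*(2*m)) (2*m*k+a) (2*m*k+b) u)
          (xDsub F ((2*n)*(2*m)) (2*m*k'+a') (2*m*k'+b') (-u))
      ∧ Commute (xDsub F ((2*n)*(2*m)) (2*m*k+a') (2*m*k+b') (-u))
          (xDsub F ((2*n)*(2*m)) (2*m*k'+a') (2*m*k'+b') (-u)) := by
  set PA : ℕ → Matrix (Fin ((2*n)*(2*m))) (Fin ((2*n)*(2*m))) F := fun k =>
      u • Eunit F ((2*n)*(2*m)) (2*m*k+a) (2*m*k+b)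
    - u • Eunit F ((2*n)*(2*m)) (2*m*(2*n-1-k)+a') (2*m*(2*n-1-k)+b') with hPA
  set PB : ℕ → Matrix (Fin ((2*n)*(2*m))) (Fin ((2*n)*(2*m))) F := fun k =>
      (-u) • Eunit F ((2*n)*(2*m)) (2*m*k+a') (2*m*k+b')
    - (-u) • Eunit F ((2*n)*(2*m)) (2*m*(2*n-1-k)+a) (2*m*(2*n-1-k)+b) with hPB
  set Mf : ℕ → Matrix (Fin ((2*n)*(2*m))) (Fin ((2*n)*(2*m))) F := fun r =>
      u • Eunit F ((2*n)*(2*m)) (2*m*r+a) (2*m*r+b)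
    - u • Eunit F ((2*n)*(2*m)) (2*m*r+a') (2*m*r+b') with hMf
  have zAA : ∀ k l, PA k * PA l = 0 := fun k l =>
    part_zero hb1 hb2 hb'1 hb'2 ha1 ha2 ha'1 ha'2
      (Ne.symm hne1) (Ne.symm hne3) (Ne.symm hne2) (Ne.symm hne4) u u u u
  have zAB : ∀ k l, PA k * PB l = 0 := fun k l =>
    part_zero hb1 hb2 hb'1 hb'2 ha'1 ha'2 ha1 ha2
      (Ne.symm hne3) (Ne.symm hne1) (Ne.symm hne4) (Ne.symm hne2) u u (-u) (-u)
  have zBA : ∀ k l, PB k * PA l = 0 := fun k l =>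
    part_zero hb'1 hb'2 hb1 hb2 ha1 ha2 ha'1 ha'2
      (Ne.symm hne2) (Ne.symm hne4) (Ne.symm hne1) (Ne.symm hne3) (-u) (-u) u u
  have zBB : ∀ k l, PB k * PB l = 0 := fun k l =>
    part_zero hb'1 hb'2 hb1 hb2 ha'1 ha'2 ha1 ha2
      (Ne.symm hne4) (Ne.symm hne2) (Ne.symm hne3) (Ne.symm hne1) (-u) (-u) (-u) (-u)
  have zMM : ∀ k l, Mf k * Mf l = 0 := fun k l =>
    part_zero hb1 hb2 hb'1 hb'2 ha1 ha2 ha'1 ha'2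
      (Ne.symm hne1) (Ne.symm hne3) (Ne.symm hne2) (Ne.symm hne4) u u u u
  have hA : ∀ k, k < n → xDsub F ((2*n)*(2*m)) (2*m*k+a) (2*m*k+b) u = 1 + PA k :=
    fun k hk => factor_eq F n m k (by omega) a b a' b' hab' hba' ha1 ha2 hb1 hb2 u
  have hB : ∀ k, k < n → xDsub F ((2*n)*(2*m)) (2*m*k+a') (2*m*k+b') (-u) = 1 + PB k :=
    fun k hk => factor_eq F n m k (by omega) a' b' a b (by omega) (by omega)
      ha'1 ha'2 hb'1 hb'2 (-u)
  constructor
  · -- product identity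
    have lhs_eq : kron (1 : Matrix (Fin (2*n)) (Fin (2*n)) F)
        (1 + u • (Eunit F (2*m) a b - Eunit F (2*m) a' b'))
        = 1 + ∑ r ∈ Finset.range (2*n), Mf r := by
      rw [kron_add_right, kron_one_one, kron_smul_right, kron_sub_right,
        kron_one_Eunit F (2*n) (2*m) a b ha1 ha2 hb1 hb2,
        kron_one_Eunit F (2*n) (2*m) a' b' ha'1 ha'2 hb'1 hb'2]
      congr 1
      rw [smul_sub, Finset.smul_sum, Finset.smul_sum, ← Finset.sum_sub_distrib]
    have fact : ∀ k ∈ List.range n,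
        xDsub F ((2*n)*(2*m)) (2*m*k+a) (2*m*k+b) u
          * xDsub F ((2*n)*(2*m)) (2*m*k+a') (2*m*k+b') (-u)
        = 1 + (Mf k + Mf (2*n-1-k)) := by
      intro k hk
      rw [List.mem_range] at hk
      rw [hA k hk, hB k hk]
      have e : (1 + PA k) * (1 + PB k) = 1 + (PA k + PB k) + PA k * PB k := by noncomm_ring
      rw [e, zAB k k, add_zero]
      congr 1
      simp only [hPA, hPB, hMf, neg_smul, sub_neg_eq_add]
      abel
    have mapeq : (List.range n).map (fun k =>
        xDsub F ((2*n)*(2*m)) (2*m*k+a) (2*m*k+b) u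
          * xDsub F ((2*n)*(2*m)) (2*m*k+a') (2*m*k+b') (-u))
        = (List.range n).map (fun k => 1 + (Mf k + Mf (2*n-1-k))) :=
      List.map_congr_left fact
    have mapeq2 : (List.range n).map (fun k => 1 + (Mf k + Mf (2*n-1-k)))
        = ((List.range n).map (fun k => Mf k + Mf (2*n-1-k))).map (fun x => 1 + x) := by
      rw [List.map_map]
      rfl
    have hz : ∀ x ∈ (List.range n).map (fun k => Mf k + Mf (2*n-1-k)),
        ∀ y ∈ (List.range n).map (fun k => Mf k + Mf (2*n-1-k)), x * y = 0 := by
      intro x hx y hy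
      simp only [List.mem_map, List.mem_range] at hx hy
      obtain ⟨k, -, rfl⟩ := hx
      obtain ⟨l, -, rfl⟩ := hy
      rw [add_mul, mul_add, mul_add, zMM, zMM, zMM, zMM]
      simp
    rw [lhs_eq, mapeq, mapeq2, list_prod_one_add _ hz, list_range_sum, sum_fold]
  · -- commutation
    intro k hk k' hk'
    refine ⟨?_, ?_, ?_⟩
    · rw [hA k hk, hA k' hk']
      exact commute_one_add (zAA k k') (zAA k' k)
    · rw [hA k hk, hB k' hk']
      exact commute_one_add (zAB k k') (zBA k' k)
    · rw [hB k hk, hB k' hk']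
      exact commute_one_add (zBB k k') (zBB k' k)

/-- the images `ρ_SO(I, x_{e_i−e_j}(u))` and `ρ_SO(I, x_{e_i+e_j}(u))` of
the Kronecker tensor product map `SO_{2n} × SO_{2m} → SO_{4nm}` are the stated products
over `k = 0, …, n−1` of pairs of orthogonal Chevalley generators of `M_{4nm}(F)`, and
all the generators involved in each product pairwise commute. -/
theorem kron_so_generator_right (F : Type*) [Field F] (n m : ℕ) (hn : 1 ≤ n) (hm : 1 ≤ m)
    (i j : ℕ) (hi : 1 ≤ i) (hij : i < j) (hj : j ≤ m) (u : F) :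
    let D := (2*n)*(2*m)
    -- the factors of ρ_SO(I, x_{e_i−e_j}(u))
    let A : ℕ → Matrix (Fin D) (Fin D) F :=
      fun k => xDsub F D (2*m*k+i) (2*m*k+j) u
    let B : ℕ → Matrix (Fin D) (Fin D) F :=
      fun k => xDsub F D (2*m*k+(2*m+1-j)) (2*m*k+(2*m+1-i)) (-u)
    -- the factors of ρ_SO(I, x_{e_i+e_j}(u))
    let A' : ℕ → Matrix (Fin D) (Fin D) F :=
      fun k => xDsub F D (2*m*k+i) (2*m*k+(2*m+1-j)) u
    let B' : ℕ → Matrix (Fin D) (Fin D) F :=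
      fun k => xDsub F D (2*m*k+j) (2*m*k+(2*m+1-i)) (-u)
    kron (1 : Matrix (Fin (2*n)) (Fin (2*n)) F) (xDsub F (2*m) i j u)
        = ((List.range n).map (fun k => A k * B k)).prod ∧
    kron (1 : Matrix (Fin (2*n)) (Fin (2*n)) F) (xDadd F (2*m) i j u)
        = ((List.range n).map (fun k => A' k * B' k)).prod ∧
    (∀ k < n, ∀ k' < n,
      Commute (A k) (A k') ∧ Commute (A k) (B k') ∧ Commute (B k) (B k')) ∧
    (∀ k < n, ∀ k' < n,
      Commute (A' k) (A' k') ∧ Commute (A' k) (B' k') ∧ Commute (B' k) (B' k')) := by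
  
  have H1 := master F n m i j (2*m+1-j) (2*m+1-i) hi (by omega) (by omega) (by omega)
    (by omega) (by omega) (by omega) (by omega) (by omega) (by omega) (by omega) (by omega)
    (by omega) (by omega) u
  have H2 := master F n m i (2*m+1-j) j (2*m+1-i) hi (by omega) (by omega) (by omega)
    (by omega) (by omega) (by omega) (by omega) (by omega) (by omega) (by omega) (by omega)
    (by omega) (by omega) u
  exact ⟨H1.1, H2.1, H1.2, H2.2⟩
end
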